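/- Let A, Y, Z be compact Hausdorff spaces with Y, Z nonempty, and define α, β: A × (Y*Z) × I → A*Y*Z by α(a, [sy,(1−s)z], t) = [st·a, s(1−t)·y, (1−s)·z] and β(a, [sy,(1−s)z], t) = [t·a, s(1−t)·y, (1−s)(1−t)·z]. Then α and β are well-defined continuous maps and are homotopic. -/

import Mathlib

noncomputable section

namespace Paper

open unitInterval

section JoinModels

variable (Y Z : Type*) [TopologicalSpace Y] [TopologicalSpace Z]

/-- The defining relation of the (binary) join as a quotient of `Y × Z × I`:
`[s·y, (1-s)·z]` forgets `y` when `s = 0` and forgets `z` when `s = 1`. -/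
def Join2Rel (a b : Y × Z × unitInterval) : Prop :=
  a.2.2 = b.2.2 ∧ (a.2.2 ≠ 0 → a.1 = b.1) ∧ (a.2.2 ≠ 1 → a.2.1 = b.2.1)

/-- The join `Y * Z` of two (nonempty, compact Hausdorff) spaces. -/
def Join2 := Quot (Join2Rel Y Z)

instance : TopologicalSpace (Join2 Y Z) := inferInstanceAs (TopologicalSpace (Quot _))

variable {Y Z}

/-- The point `[s·y, (1-s)·z]` of the join. -/
def Join2.mk (y : Y) (z : Z) (s : unitInterval) : Join2 Y Z := Quot.mk _ (y, z, s)

variable (A : Type*) [TopologicalSpace A]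

/-- The standard 2-simplex, as a subtype of `ℝ³`. -/
def Delta2 : Type := {p : ℝ × ℝ × ℝ // 0 ≤ p.1 ∧ 0 ≤ p.2.1 ∧ 0 ≤ p.2.2 ∧ p.1 + p.2.1 + p.2.2 = 1}

instance : TopologicalSpace Delta2 := inferInstanceAs (TopologicalSpace {_p : ℝ × ℝ × ℝ // _})

/-- The defining relation of the threefold join `A * Y * Z` as a quotient of
`A × Y × Z × Δ²`: the `i`-th coordinate is forgotten where the `i`-th barycentric
coordinate vanishes. -/
def Join3Rel (A Y Z : Type*) (a b : A × Y × Z × Delta2) : Prop :=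
  a.2.2.2 = b.2.2.2 ∧ (a.2.2.2.1.1 ≠ 0 → a.1 = b.1) ∧
    (a.2.2.2.1.2.1 ≠ 0 → a.2.1 = b.2.1) ∧ (a.2.2.2.1.2.2 ≠ 0 → a.2.2.1 = b.2.2.1)

/-- The threefold join `A * Y * Z`. -/
def Join3 (A Y Z : Type*) := Quot (Join3Rel A Y Z)

instance (A Y Z : Type*) [TopologicalSpace A] [TopologicalSpace Y] [TopologicalSpace Z] :
    TopologicalSpace (Join3 A Y Z) :=
  inferInstanceAs (TopologicalSpace (Quot _))

variable {A}

/-- The point `[t₀·a, t₁·y, t₂·z]` of the threefold join. -/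
def Join3.mk (a : A) (y : Y) (z : Z) (p : Delta2) : Join3 A Y Z := Quot.mk _ (a, y, z, p)

/-- The barycentric coordinates `(st, s(1-t), 1-s)` of the map `α`. -/
def alphaCoords (s t : unitInterval) : Delta2 :=
  ⟨((s : ℝ) * t, (s : ℝ) * (1 - (t : ℝ)), 1 - (s : ℝ)),
    mul_nonneg s.2.1 t.2.1, mul_nonneg s.2.1 (sub_nonneg.mpr t.2.2),
    sub_nonneg.mpr s.2.2, by ring⟩

/-- The barycentric coordinates `(t, s(1-t), (1-s)(1-t))` of the map `β`. -/
def betaCoords (s t : unitInterval) : Delta2 :=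
  ⟨((t : ℝ), (s : ℝ) * (1 - (t : ℝ)), (1 - (s : ℝ)) * (1 - (t : ℝ))),
    t.2.1, mul_nonneg s.2.1 (sub_nonneg.mpr t.2.2),
    mul_nonneg (sub_nonneg.mpr s.2.2) (sub_nonneg.mpr t.2.2), by ring⟩

end JoinModels

end Paper

/-! Both maps are induced by `(a, y, z, s, t) ↦ [a, y, z; c s t]` for a continuous
`c : I × I → Δ²` that kills the `Y`-weight at `s = 0` and the `Z`-weight at `s = 1`; this face
condition is what lets the map descend to the join, and it survives the straight-line homotopy
between two such `c`, which therefore induces a homotopy. The induced maps are continuous because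
the product of the quotient map `Y × Z × I → Y * Z` with a locally compact space is again a
quotient map. -/

namespace Paper

open unitInterval Function

variable {A Y Z K : Type*}

namespace Delta2

def lineMap (p q : Delta2) (u : I) : Delta2 :=
  ⟨(1 - (u : ℝ)) • p.1 + (u : ℝ) • q.1, by
    obtain ⟨⟨p₀, p₁, p₂⟩, hp₀, hp₁, hp₂, hp⟩ := p
    obtain ⟨⟨q₀, q₁, q₂⟩, hq₀, hq₁, hq₂, hq⟩ := q
    have hu : 0 ≤ 1 - (u : ℝ) := sub_nonneg.2 u.2.2
    have hu' : 0 ≤ (u : ℝ) := u.2.1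
    simp only [Prod.smul_mk, Prod.mk_add_mk, smul_eq_mul]
    refine ⟨by positivity, by positivity, by positivity, ?_⟩
    linear_combination (1 - (u : ℝ)) * hp + (u : ℝ) * hq⟩

@[simp]
lemma lineMap_zero (p q : Delta2) : lineMap p q 0 = p :=
  Subtype.ext (by simp [lineMap])

@[simp]
lemma lineMap_one (p q : Delta2) : lineMap p q 1 = q :=
  Subtype.ext (by simp [lineMap])

@[fun_prop]
lemma _root_.Continuous.delta2LineMap {X : Type*} [TopologicalSpace X] {p q : X → Delta2}
    {u : X → I} (hp : Continuous p) (hq : Continuous q) (hu : Continuous u) :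
    Continuous fun x => lineMap (p x) (q x) (u x) := by
  have hp' : Continuous fun x => (p x).1 := continuous_subtype_val.comp hp
  have hq' : Continuous fun x => (q x).1 := continuous_subtype_val.comp hq
  exact Continuous.subtype_mk (by fun_prop) _

end Delta2

/-- The `Y`-weight `(c s k).1.2.1` vanishes where the join forgets `y`, and the `Z`-weight
`(c s k).1.2.2` where it forgets `z`: exactly what `[s·y, (1-s)·z], k ↦ [a k, y, z; c s k]`
needs to be well defined. -/
structure FaceCompatible (c : I → K → Delta2) : Prop where
  y_weight_eq_zero : ∀ k, (c 0 k).1.2.1 = 0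
  z_weight_eq_zero : ∀ k, (c 1 k).1.2.2 = 0

lemma FaceCompatible.lineMap {c₀ c₁ : I → K → Delta2} (h₀ : FaceCompatible c₀)
    (h₁ : FaceCompatible c₁) :
    FaceCompatible fun s (k : I × K) => Delta2.lineMap (c₀ s k.2) (c₁ s k.2) k.1 where
  y_weight_eq_zero k := by simp [Delta2.lineMap, h₀.y_weight_eq_zero, h₁.y_weight_eq_zero]
  z_weight_eq_zero k := by simp [Delta2.lineMap, h₀.z_weight_eq_zero, h₁.z_weight_eq_zero]

lemma FaceCompatible.comp_right {c : I → K → Delta2} (hc : FaceCompatible c) {L : Type*}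
    (f : L → K) : FaceCompatible fun s l => c s (f l) where
  y_weight_eq_zero l := hc.y_weight_eq_zero (f l)
  z_weight_eq_zero l := hc.z_weight_eq_zero (f l)

lemma faceCompatible_alphaCoords : FaceCompatible alphaCoords where
  y_weight_eq_zero _ := by simp [alphaCoords]
  z_weight_eq_zero _ := by simp [alphaCoords]

lemma faceCompatible_betaCoords : FaceCompatible betaCoords where
  y_weight_eq_zero _ := by simp [betaCoords]
  z_weight_eq_zero _ := by simp [betaCoords]

lemma continuous_uncurry_alphaCoords : Continuous (uncurry alphaCoords) :=
  Continuous.subtype_mk (by fun_prop) _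

lemma continuous_uncurry_betaCoords : Continuous (uncurry betaCoords) :=
  Continuous.subtype_mk (by fun_prop) _

namespace Join2

def toJoin3 (a : K → A) (c : I → K → Delta2) (hc : FaceCompatible c)
    (x : Join2 Y Z × K) : Join3 A Y Z :=
  Quot.lift (fun p : Y × Z × I => Join3.mk (a x.2) p.1 p.2.1 (c p.2.2 x.2))
    (by
      rintro ⟨y, z, s⟩ ⟨y', z', s'⟩ ⟨rfl : s = s', hy, hz⟩
      refine Quot.sound ⟨rfl, fun _ => rfl, fun h => hy ?_, fun h => hz ?_⟩
      · rintro rfl; exact h (hc.y_weight_eq_zero _)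
      · rintro rfl; exact h (hc.z_weight_eq_zero _))
    x.1

end Join2

variable [TopologicalSpace A] [TopologicalSpace Y] [TopologicalSpace Z] [TopologicalSpace K]

lemma Join2.continuous_toJoin3 [LocallyCompactSpace K] {a : K → A} {c : I → K → Delta2}
    (ha : Continuous a) (hc : Continuous (uncurry c)) (hfc : FaceCompatible c) :
    Continuous (toJoin3 (Y := Y) (Z := Z) a c hfc) := by
  refine isQuotientMap_quot_mk.continuous_lift_prod_left (continuous_quot_mk.comp ?_)
  have : Continuous fun p : (Y × Z × I) × K => c p.1.2.2 p.2 :=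
    hc.comp (f := fun p : (Y × Z × I) × K => (p.1.2.2, p.2)) (by fun_prop)
  fun_prop

variable [LocallyCompactSpace A] {c₀ c₁ : I → I → Delta2}

def joinMapOfCoords (c : I → I → Delta2) (hc : Continuous (uncurry c))
    (hfc : FaceCompatible c) : C(A × Join2 Y Z × I, Join3 A Y Z) where
  toFun x :=
    Join2.toJoin3 Prod.fst (fun s k => c s k.2) (hfc.comp_right Prod.snd) (x.2.1, x.1, x.2.2)
  continuous_toFun := by
    have : Continuous fun p : I × A × I => c p.1 p.2.2 :=
      hc.comp (f := fun p : I × A × I => (p.1, p.2.2)) (by fun_prop)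
    exact (Join2.continuous_toJoin3 continuous_fst this _).comp (by fun_prop)

@[simp]
lemma joinMapOfCoords_mk (c : I → I → Delta2) (hc : Continuous (uncurry c))
    (hfc : FaceCompatible c) (a : A) (y : Y) (z : Z) (s t : I) :
    joinMapOfCoords c hc hfc (a, Join2.mk y z s, t) = Join3.mk a y z (c s t) :=
  rfl

def joinMapOfCoordsHomotopy (hc₀ : Continuous (uncurry c₀)) (hfc₀ : FaceCompatible c₀)
    (hc₁ : Continuous (uncurry c₁)) (hfc₁ : FaceCompatible c₁) :
    (joinMapOfCoords (A := A) (Y := Y) (Z := Z) c₀ hc₀ hfc₀).Homotopy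
      (joinMapOfCoords c₁ hc₁ hfc₁) where
  toFun x := Join2.toJoin3 (fun k : I × A × I => k.2.1)
    (fun s k => Delta2.lineMap (c₀ s k.2.2) (c₁ s k.2.2) k.1)
    ((hfc₀.comp_right Prod.snd).lineMap (hfc₁.comp_right Prod.snd))
    (x.2.2.1, x.1, x.2.1, x.2.2.2)
  continuous_toFun := by
    have h₀ : Continuous fun p : I × I × A × I => c₀ p.1 p.2.2.2 :=
      hc₀.comp (f := fun p : I × I × A × I => (p.1, p.2.2.2)) (by fun_prop)
    have h₁ : Continuous fun p : I × I × A × I => c₁ p.1 p.2.2.2 :=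
      hc₁.comp (f := fun p : I × I × A × I => (p.1, p.2.2.2)) (by fun_prop)
    exact (Join2.continuous_toJoin3 (by fun_prop) (by fun_prop) _).comp (by fun_prop)
  map_zero_left := by
    rintro ⟨a, j, t⟩
    induction j using Quot.ind
    exact congrArg (Join3.mk _ _ _) (Delta2.lineMap_zero _ _)
  map_one_left := by
    rintro ⟨a, j, t⟩
    induction j using Quot.ind
    exact congrArg (Join3.mk _ _ _) (Delta2.lineMap_one _ _)

end Paper

open Paper unitInterval

theorem alpha_beta_welldefined_and_homotopic_general
    (A Y Z : Type*) [TopologicalSpace A] [TopologicalSpace Y] [TopologicalSpace Z]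
    [CompactSpace A] [T2Space A] :
    ∃ α β : C(A × Join2 Y Z × unitInterval, Join3 A Y Z),
      (∀ (a : A) (y : Y) (z : Z) (s t : unitInterval),
        α (a, Join2.mk y z s, t) = Join3.mk a y z (alphaCoords s t)) ∧
      (∀ (a : A) (y : Y) (z : Z) (s t : unitInterval),
        β (a, Join2.mk y z s, t) = Join3.mk a y z (betaCoords s t)) ∧
      Nonempty (α.Homotopy β) :=
  ⟨_, _, joinMapOfCoords_mk _ _ _, joinMapOfCoords_mk _ _ _,
    ⟨joinMapOfCoordsHomotopy continuous_uncurry_alphaCoords faceCompatible_alphaCoords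
      continuous_uncurry_betaCoords faceCompatible_betaCoords⟩⟩

/-- Let `A, Y, Z` be compact Hausdorff spaces with `Y, Z` nonempty.
The maps `α, β : A × (Y*Z) × I → A*Y*Z` given by
`α(a, [sy,(1-s)z], t) = [st·a, s(1-t)·y, (1-s)·z]` and
`β(a, [sy,(1-s)z], t) = [t·a, s(1-t)·y, (1-s)(1-t)·z]`
are well-defined continuous maps and are homotopic. -/
theorem alpha_beta_welldefined_and_homotopic
    (A Y Z : Type*) [TopologicalSpace A] [TopologicalSpace Y] [TopologicalSpace Z]
    [CompactSpace A] [CompactSpace Y] [CompactSpace Z]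
    [T2Space A] [T2Space Y] [T2Space Z]
    [Nonempty Y] [Nonempty Z] :
    ∃ α β : C(A × Join2 Y Z × unitInterval, Join3 A Y Z),
      (∀ (a : A) (y : Y) (z : Z) (s t : unitInterval),
        α (a, Join2.mk y z s, t) = Join3.mk a y z (alphaCoords s t)) ∧
      (∀ (a : A) (y : Y) (z : Z) (s t : unitInterval),
        β (a, Join2.mk y z s, t) = Join3.mk a y z (betaCoords s t)) ∧
      Nonempty (α.Homotopy β) :=
  alpha_beta_welldefined_and_homotopic_general A Y Z
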